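/- Suppose that E is convex on P(X) and that e_0 := E(μ0) < ∞. Then the entropy S(e) is concave on (−∞, e_0]. -/

import Mathlib

open MeasureTheory Filter Set Topology
open scoped Classical

noncomputable section

/-- The entropy `S(μ)` of `μ` relative to `μ0`: `-∫ log(dμ/dμ0) dμ` if `μ ≪ μ0`
(and `-∞` if this integral equals `+∞`), and `-∞` otherwise. -/
def Sm {X : Type*} [MeasurableSpace X] (μ0 μ : Measure X) : EReal :=
  if μ ≪ μ0 ∧ Integrable (fun x => Real.log ((μ.rnDeriv μ0 x).toReal)) μ
  then ((-(∫ x, Real.log ((μ.rnDeriv μ0 x).toReal) ∂μ) : ℝ) : EReal)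
  else ⊥

/-- The affine combination `(1-t)·μ + t·ν` of two probability measures (for `t ∈ [0,1]`). -/
def pmAffine {X : Type*} [MeasurableSpace X] (μ ν : ProbabilityMeasure X) (t : ℝ) :
    ProbabilityMeasure X :=
  if h : 0 ≤ t ∧ t ≤ 1 then
    ⟨ENNReal.ofReal (1 - t) • (μ : Measure X) + ENNReal.ofReal t • (ν : Measure X), by
      constructor
      simp only [Measure.coe_add, Measure.coe_smul, Pi.add_apply, Pi.smul_apply,
        smul_eq_mul, measure_univ, mul_one]
      rw [← ENNReal.ofReal_add (by linarith [h.2]) h.1, sub_add_cancel, ENNReal.ofReal_one]⟩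
  else μ

/-- The entropy at energy `e`: `S(e) = sup { S(μ) : μ ∈ P(X), E(μ) = e }`
(equal to `-∞` if no such `μ` exists). -/
def Sent {X : Type*} [MeasurableSpace X] (μ0 : ProbabilityMeasure X)
    (E : ProbabilityMeasure X → EReal) (e : ℝ) : EReal :=
  sSup {s : EReal | ∃ μ : ProbabilityMeasure X,
    E μ = (e : EReal) ∧ s = Sm (μ0 : Measure X) (μ : Measure X)}

/-- `E` is convex on `P(X)`. -/
def EConvex {X : Type*} [MeasurableSpace X] (E : ProbabilityMeasure X → EReal) : Prop :=
  ∀ μ ν : ProbabilityMeasure X, ∀ t : ℝ, 0 ≤ t → t ≤ 1 →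
    E (pmAffine μ ν t) ≤ ((1 - t : ℝ) : EReal) * E μ + ((t : ℝ) : EReal) * E ν

/-- `E` has the affine continuity property: for every `μ1 ∈ P(X)` with `E(μ1) < ∞` and
`S(μ1) > -∞`, the function `t ↦ E((1-t)μ0 + tμ1)` is continuous on `[0,1]`. -/
def AffineCont {X : Type*} [MeasurableSpace X] (μ0 : ProbabilityMeasure X)
    (E : ProbabilityMeasure X → EReal) : Prop :=
  ∀ μ1 : ProbabilityMeasure X, E μ1 ≠ ⊤ → Sm (μ0 : Measure X) (μ1 : Measure X) ≠ ⊥ →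
    ContinuousOn (fun t => E (pmAffine μ0 μ1 t)) (Icc (0:ℝ) 1)

/-- `μ0` has the energy approximation property for `E`. -/
def EnergyApprox {X : Type*} [MeasurableSpace X] [TopologicalSpace X] [OpensMeasurableSpace X]
    (μ0 : ProbabilityMeasure X) (E : ProbabilityMeasure X → EReal) : Prop :=
  ∀ μ : ProbabilityMeasure X, ∃ μs : ℕ → ProbabilityMeasure X,
    (∀ j, (μs j : Measure X) ≪ (μ0 : Measure X)) ∧
    Tendsto μs atTop (nhds μ) ∧
    Tendsto (fun j => E (μs j)) atTop (nhds (E μ))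

/-- The free energy functional `F_β(μ) = βE(μ) − S(μ)` (equal to `+∞` when `S(μ) = −∞`). -/
def Fbeta {X : Type*} [MeasurableSpace X] (μ0 : ProbabilityMeasure X)
    (E : ProbabilityMeasure X → EReal) (β : ℝ) (μ : ProbabilityMeasure X) : EReal :=
  if Sm (μ0 : Measure X) (μ : Measure X) = ⊥ then ⊤
  else (β : EReal) * E μ - Sm (μ0 : Measure X) (μ : Measure X)

/-- The free energy `F(β) = inf_{μ ∈ P(X)} (βE(μ) − S(μ))`. -/
def freeEnergy {X : Type*} [MeasurableSpace X] (μ0 : ProbabilityMeasure X)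
    (E : ProbabilityMeasure X → EReal) (β : ℝ) : EReal :=
  ⨅ μ : ProbabilityMeasure X, Fbeta μ0 E β μ

/-- The concave Legendre–Fenchel transform `f*(y) := inf_{x ∈ ℝ} (x·y − f(x))`. -/
def LegT (f : ℝ → EReal) (y : ℝ) : EReal := ⨅ x : ℝ, ((x * y : ℝ) : EReal) - f x

/-- Concavity of an `EReal`-valued function on a set of reals. -/
def ConcOn (s : Set ℝ) (f : ℝ → EReal) : Prop :=
  ∀ x ∈ s, ∀ y ∈ s, ∀ t : ℝ, 0 ≤ t → t ≤ 1 →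
    ((t : ℝ) : EReal) * f x + ((1 - t : ℝ) : EReal) * f y ≤ f (t * x + (1 - t) * y)

/-- Strict concavity of an `EReal`-valued function on a set of reals. -/
def StrictConcOn (s : Set ℝ) (f : ℝ → EReal) : Prop :=
  ∀ x ∈ s, ∀ y ∈ s, x ≠ y → ∀ t : ℝ, 0 < t → t < 1 →
    ((t : ℝ) : EReal) * f x + ((1 - t : ℝ) : EReal) * f y < f (t * x + (1 - t) * y)

/-!
Entropy is minus the Kullback–Leibler divergence from `μ0`, hence concave along mixtures
(`klFun` is convex), while `E` is convex along them. So if `E μ = x` and `E ν = y`, the mixture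
`t μ + (1 - t) ν` has entropy at least `t S(μ) + (1 - t) S(ν)` and energy at most
`z = t x + (1 - t) y`. It remains to see that for `z ≤ e₀` the value `S(z)` dominates the entropy
of every `μ` with `E μ ≤ z`. Mixing `μ` with `μ0` does not lower its entropy; along the mixing
segment the energy is a real convex function starting at most `z`, and lower semicontinuity at
`μ0`, where `E = e₀ > z`, makes it exceed `z` before the end of the segment. The intermediate
value theorem then yields a mixture of energy exactly `z`.
-/

open InformationTheory
open scoped ENNReal

lemma ConvexOn.exists_eq_of_le_of_le {G : ℝ → ℝ} {a b c z : ℝ} (hG : ConvexOn ℝ (Icc a b) G)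
    (hac : a < c) (hcb : c < b) (ha : G a ≤ z) (hc : z ≤ G c) : ∃ s ∈ Icc a c, G s = z := by
  rcases ha.eq_or_lt with ha | ha
  · exact ⟨a, ⟨le_rfl, hac.le⟩, ha⟩
  -- convexity bounds `G` near `a` by the chord to `c`, so `G < z` at some `a' ∈ (a, c)`;
  -- on `[a', c] ⊆ (a, b)` the function is continuous
  set δ := (z - G a) / (2 * (G c - G a))
  have hδ0 : 0 < δ := div_pos (by linarith) (by linarith)
  have hδ1 : δ < 1 := by rw [div_lt_one (by linarith)]; linarith
  have hδ : δ * (G c - G a) = (z - G a) / 2 := by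
    simp only [δ]; field_simp [(by linarith : G c - G a ≠ 0)]
  set a' := (1 - δ) * a + δ * c
  have haa' : a < a' := by nlinarith
  have ha'c : a' < c := by nlinarith
  have hGa' : G a' < z := by
    have h := hG.2 ⟨le_rfl, hac.le.trans hcb.le⟩ ⟨hac.le, hcb.le⟩ (by linarith : 0 ≤ 1 - δ)
      hδ0.le (by ring)
    simp only [smul_eq_mul] at h
    nlinarith
  have hcont : ContinuousOn G (Icc a' c) := by
    refine hG.continuousOn_interior.mono ?_
    rw [interior_Icc]
    exact Icc_subset_Ioo haa' hcb
  obtain ⟨s, hs, hGs⟩ := intermediate_value_Icc ha'c.le hcont ⟨hGa'.le, hc⟩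
  exact ⟨s, ⟨haa'.le.trans hs.1, hs.2⟩, hGs⟩

lemma EReal.coe_mul_neg_coe_ennreal {a : ℝ} (ha : 0 ≤ a) (K : ℝ≥0∞) :
    (a : EReal) * -(K : EReal) = -((ENNReal.ofReal a * K : ℝ≥0∞) : EReal) := by
  rw [EReal.coe_ennreal_mul, EReal.coe_ennreal_ofReal, max_eq_left ha, mul_neg]

lemma EReal.lt_coe_mul_sSup_iff {t : ℝ} (ht : 0 < t) {A : Set EReal} {a : EReal} :
    a < (t : EReal) * sSup A ↔ ∃ s ∈ A, a < (t : EReal) * s := by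
  simp only [mul_comm (t : EReal), ← EReal.div_lt_iff (by exact_mod_cast ht) (EReal.coe_ne_top t),
    lt_sSup_iff]

section Mixture

variable {X : Type*} [MeasurableSpace X]

instance isFiniteMeasure_ofReal_smul {μ : Measure X} [IsFiniteMeasure μ] {r : ℝ} :
    IsFiniteMeasure (ENNReal.ofReal r • μ) :=
  ⟨ENNReal.mul_lt_top ENNReal.ofReal_lt_top (measure_lt_top μ univ)⟩

lemma pmAffine_coe (μ ν : ProbabilityMeasure X) {s : ℝ} (h0 : 0 ≤ s) (h1 : s ≤ 1) :
    (pmAffine μ ν s : Measure X)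
      = ENNReal.ofReal (1 - s) • (μ : Measure X) + ENNReal.ofReal s • (ν : Measure X) := by
  rw [pmAffine]
  exact congrArg Subtype.val (dif_pos ⟨h0, h1⟩)

lemma pmAffine_zero (μ ν : ProbabilityMeasure X) : pmAffine μ ν 0 = μ := by
  apply ProbabilityMeasure.toMeasure_injective
  simp [pmAffine_coe μ ν le_rfl zero_le_one]

lemma pmAffine_one (μ ν : ProbabilityMeasure X) : pmAffine μ ν 1 = ν := by
  apply ProbabilityMeasure.toMeasure_injective
  simp [pmAffine_coe μ ν zero_le_one le_rfl]

lemma pmAffine_pmAffine (μ ν : ProbabilityMeasure X) {u v t : ℝ} (hu : u ∈ Icc (0 : ℝ) 1)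
    (hv : v ∈ Icc (0 : ℝ) 1) (ht0 : 0 ≤ t) (ht1 : t ≤ 1) :
    pmAffine (pmAffine μ ν u) (pmAffine μ ν v) t = pmAffine μ ν ((1 - t) * u + t * v) := by
  obtain ⟨hu0, hu1⟩ := hu
  obtain ⟨hv0, hv1⟩ := hv
  apply ProbabilityMeasure.toMeasure_injective
  rw [pmAffine_coe _ _ ht0 ht1, pmAffine_coe _ _ hu0 hu1, pmAffine_coe _ _ hv0 hv1,
    pmAffine_coe _ _ (by nlinarith) (by nlinarith), smul_add, smul_add, smul_smul, smul_smul,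
    smul_smul, smul_smul, ← ENNReal.ofReal_mul (by linarith), ← ENNReal.ofReal_mul (by linarith),
    ← ENNReal.ofReal_mul ht0, ← ENNReal.ofReal_mul ht0, add_add_add_comm, ← add_smul, ← add_smul,
    ← ENNReal.ofReal_add (by nlinarith) (by nlinarith),
    ← ENNReal.ofReal_add (by nlinarith) (by nlinarith)]
  congr 3
  ring

variable [TopologicalSpace X] [OpensMeasurableSpace X]

lemma integral_pmAffine (μ ν : ProbabilityMeasure X) (f : BoundedContinuousFunction X ℝ) {s : ℝ}
    (h0 : 0 ≤ s) (h1 : s ≤ 1) :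
    ∫ x, f x ∂(pmAffine μ ν s : Measure X)
      = (1 - s) * ∫ x, f x ∂(μ : Measure X) + s * ∫ x, f x ∂(ν : Measure X) := by
  rw [pmAffine_coe μ ν h0 h1, integral_add_measure (f.integrable _) (f.integrable _),
    integral_smul_measure, integral_smul_measure, ENNReal.toReal_ofReal (by linarith),
    ENNReal.toReal_ofReal h0, smul_eq_mul, smul_eq_mul]

lemma continuousOn_pmAffine (μ ν : ProbabilityMeasure X) :
    ContinuousOn (pmAffine μ ν) (Icc 0 1) := by
  intro s hs
  rw [ContinuousWithinAt, ProbabilityMeasure.tendsto_iff_forall_integral_tendsto]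
  intro f
  have hlin : Continuous fun r : ℝ =>
      (1 - r) * ∫ x, f x ∂(μ : Measure X) + r * ∫ x, f x ∂(ν : Measure X) := by fun_prop
  rw [integral_pmAffine μ ν f hs.1 hs.2]
  refine ((hlin.tendsto s).mono_left nhdsWithin_le_nhds).congr' ?_
  filter_upwards [self_mem_nhdsWithin] with r hr
  exact (integral_pmAffine μ ν f hr.1 hr.2).symm

end Mixture

section Entropy

variable {X : Type*} [MeasurableSpace X]

lemma Sm_eq_neg_klDiv (μ0 μ : Measure X) [IsProbabilityMeasure μ0] [IsProbabilityMeasure μ] :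
    Sm μ0 μ = -(klDiv μ μ0 : EReal) := by
  unfold Sm
  split_ifs with h
  · have hnonneg := integral_llr_add_sub_measure_univ_nonneg h.1 h.2
    rw [probReal_univ, probReal_univ, add_sub_cancel_right] at hnonneg
    rw [klDiv_of_ac_of_integrable h.1 h.2, probReal_univ, probReal_univ, add_sub_cancel_right,
      EReal.coe_ennreal_ofReal, max_eq_left hnonneg]
    rfl
  · rw [klDiv_eq_top_iff.2 fun hac hint => h ⟨hac, hint⟩]
    rfl

lemma Sm_self (μ0 : Measure X) [IsProbabilityMeasure μ0] : Sm μ0 μ0 = 0 := by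
  simp [Sm_eq_neg_klDiv]

lemma Sm_nonpos (μ0 μ : Measure X) [IsProbabilityMeasure μ0] [IsProbabilityMeasure μ] :
    Sm μ0 μ ≤ 0 := by
  rw [Sm_eq_neg_klDiv, EReal.neg_le, neg_zero]
  exact EReal.coe_ennreal_nonneg _

lemma Sm_of_not_absolutelyContinuous {μ0 μ : Measure X} (h : ¬μ ≪ μ0) : Sm μ0 μ = ⊥ :=
  if_neg fun h' => h h'.1

lemma klDiv_pmAffine_le (μ ν : ProbabilityMeasure X) {ρ : Measure X} [IsFiniteMeasure ρ]
    (hμ : (μ : Measure X) ≪ ρ) (hν : (ν : Measure X) ≪ ρ) {s : ℝ} (h0 : 0 ≤ s) (h1 : s ≤ 1) :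
    klDiv (pmAffine μ ν s) ρ
      ≤ ENNReal.ofReal (1 - s) * klDiv μ ρ + ENNReal.ofReal s * klDiv ν ρ := by
  have hac : (pmAffine μ ν s : Measure X) ≪ ρ := by
    rw [pmAffine_coe μ ν h0 h1]
    exact (hμ.smul_left _).add_left (hν.smul_left _)
  rw [klDiv_eq_lintegral_klFun_of_ac hac, klDiv_eq_lintegral_klFun_of_ac hμ,
    klDiv_eq_lintegral_klFun_of_ac hν, ← lintegral_const_mul' _ _ ENNReal.ofReal_ne_top,
    ← lintegral_const_mul' _ _ ENNReal.ofReal_ne_top, ← lintegral_add_left (by fun_prop)]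
  refine lintegral_mono_ae ?_
  rw [pmAffine_coe μ ν h0 h1]
  filter_upwards [Measure.rnDeriv_add' (ENNReal.ofReal (1 - s) • (μ : Measure X))
      (ENNReal.ofReal s • (ν : Measure X)) ρ,
    Measure.rnDeriv_smul_left_of_ne_top' (μ : Measure X) ρ ENNReal.ofReal_ne_top,
    Measure.rnDeriv_smul_left_of_ne_top' (ν : Measure X) ρ ENNReal.ofReal_ne_top,
    Measure.rnDeriv_lt_top (μ : Measure X) ρ, Measure.rnDeriv_lt_top (ν : Measure X) ρ]
    with x hx hxμ hxν hμx hνx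
  set a := ((μ : Measure X).rnDeriv ρ x).toReal
  set b := ((ν : Measure X).rnDeriv ρ x).toReal
  have hmix : ((ENNReal.ofReal (1 - s) • (μ : Measure X)
      + ENNReal.ofReal s • (ν : Measure X)).rnDeriv ρ x).toReal = (1 - s) * a + s * b := by
    rw [hx, Pi.add_apply, hxμ, hxν, Pi.smul_apply, Pi.smul_apply, smul_eq_mul, smul_eq_mul,
      ENNReal.toReal_add (by finiteness) (by finiteness), ENNReal.toReal_mul, ENNReal.toReal_mul,
      ENNReal.toReal_ofReal (by linarith), ENNReal.toReal_ofReal h0]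
  have hconv : klFun ((1 - s) * a + s * b) ≤ (1 - s) * klFun a + s * klFun b :=
    convexOn_klFun.2 ENNReal.toReal_nonneg ENNReal.toReal_nonneg (by linarith) h0 (by ring)
  rw [hmix, ← ENNReal.ofReal_mul (by linarith), ← ENNReal.ofReal_mul h0,
    ← ENNReal.ofReal_add (mul_nonneg (by linarith) (klFun_nonneg ENNReal.toReal_nonneg))
      (mul_nonneg h0 (klFun_nonneg ENNReal.toReal_nonneg))]
  exact ENNReal.ofReal_le_ofReal hconv

lemma le_Sm_pmAffine (μ0 : Measure X) [IsProbabilityMeasure μ0] (μ ν : ProbabilityMeasure X)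
    {s : ℝ} (h0 : 0 ≤ s) (h1 : s ≤ 1) :
    ((1 - s : ℝ) : EReal) * Sm μ0 μ + (s : EReal) * Sm μ0 ν ≤ Sm μ0 (pmAffine μ ν s) := by
  rcases h0.eq_or_lt with rfl | h0
  · simp [pmAffine_zero]
  rcases h1.eq_or_lt with rfl | h1
  · simp [pmAffine_one]
  by_cases hμ : (μ : Measure X) ≪ μ0
  swap
  · rw [Sm_of_not_absolutelyContinuous hμ, EReal.coe_mul_bot_of_pos (by linarith), EReal.bot_add]
    exact bot_le
  by_cases hν : (ν : Measure X) ≪ μ0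
  swap
  · rw [Sm_of_not_absolutelyContinuous hν, EReal.coe_mul_bot_of_pos h0, EReal.add_bot]
    exact bot_le
  rw [Sm_eq_neg_klDiv, Sm_eq_neg_klDiv, Sm_eq_neg_klDiv,
    EReal.coe_mul_neg_coe_ennreal (by linarith), EReal.coe_mul_neg_coe_ennreal h0.le,
    ← sub_eq_add_neg, ← EReal.neg_add (.inl (EReal.coe_ennreal_ne_bot _))
      (.inr (EReal.coe_ennreal_ne_bot _)),
    ← EReal.coe_ennreal_add, EReal.neg_le_neg_iff, EReal.coe_ennreal_le_coe_ennreal_iff]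
  exact klDiv_pmAffine_le μ ν hμ hν h0.le h1.le

lemma Sm_le_Sm_pmAffine_reference (μ0 μ : ProbabilityMeasure X) {s : ℝ} (h0 : 0 ≤ s)
    (h1 : s ≤ 1) :
    Sm (μ0 : Measure X) μ ≤ Sm (μ0 : Measure X) (pmAffine μ μ0 s : Measure X) := by
  rw [Sm_eq_neg_klDiv, Sm_eq_neg_klDiv, EReal.neg_le_neg_iff,
    EReal.coe_ennreal_le_coe_ennreal_iff]
  by_cases hμ : (μ : Measure X) ≪ μ0
  swap
  · simp [klDiv_of_not_ac hμ]
  calc klDiv (pmAffine μ μ0 s : Measure X) μ0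
      ≤ ENNReal.ofReal (1 - s) * klDiv (μ : Measure X) μ0
          + ENNReal.ofReal s * klDiv (μ0 : Measure X) μ0 :=
        klDiv_pmAffine_le μ μ0 hμ .rfl h0 h1
    _ = ENNReal.ofReal (1 - s) * klDiv (μ : Measure X) μ0 := by
        rw [klDiv_self, mul_zero, add_zero]
    _ ≤ klDiv (μ : Measure X) μ0 :=
        mul_le_of_le_one_left' (ENNReal.ofReal_le_one.2 (by linarith : 1 - s ≤ 1))

end Entropy

section Energy

variable {X : Type*} [MeasurableSpace X] {E : ProbabilityMeasure X → EReal}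

lemma convexOn_toReal_energy_pmAffine (hEbot : ∀ μ, E μ ≠ ⊥) (hEconv : EConvex E)
    {μ ν : ProbabilityMeasure X} (hfin : ∀ s ∈ Icc (0 : ℝ) 1, E (pmAffine μ ν s) ≠ ⊤) :
    ConvexOn ℝ (Icc 0 1) fun s => (E (pmAffine μ ν s)).toReal := by
  refine ⟨convex_Icc 0 1, fun u hu v hv a b ha hb hab => ?_⟩
  obtain rfl : a = 1 - b := by linarith
  have hmem : (1 - b) * u + b * v ∈ Icc (0 : ℝ) 1 := by
    simpa only [smul_eq_mul] using convex_Icc (0 : ℝ) 1 hu hv ha hb hab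
  have h := hEconv (pmAffine μ ν u) (pmAffine μ ν v) b hb (by linarith)
  rw [pmAffine_pmAffine μ ν hu hv hb (by linarith), ← EReal.coe_toReal (hfin u hu) (hEbot _),
    ← EReal.coe_toReal (hfin v hv) (hEbot _), ← EReal.coe_toReal (hfin _ hmem) (hEbot _)] at h
  simp only [smul_eq_mul]
  exact_mod_cast h

variable [TopologicalSpace X] [OpensMeasurableSpace X]

lemma exists_energy_pmAffine_eq (hEbot : ∀ μ, E μ ≠ ⊥) (hElsc : LowerSemicontinuous E)
    (hEconv : EConvex E) {μ ν : ProbabilityMeasure X} {z e : ℝ} (hμ : E μ ≤ z) (hν : E ν = e)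
    (hz : z < e) : ∃ s ∈ Icc (0 : ℝ) 1, E (pmAffine μ ν s) = z := by
  have hμ_top : E μ ≠ ⊤ := (hμ.trans_lt (EReal.coe_lt_top z)).ne
  have hfin : ∀ s ∈ Icc (0 : ℝ) 1, E (pmAffine μ ν s) ≠ ⊤ := by
    intro s hs
    have h := hEconv μ ν s hs.1 hs.2
    rw [← EReal.coe_toReal hμ_top (hEbot μ), hν] at h
    exact (h.trans_lt (by exact_mod_cast EReal.coe_lt_top ((1 - s) * (E μ).toReal + s * e))).ne
  set G := fun s => (E (pmAffine μ ν s)).toReal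
  have hE_eq : ∀ s ∈ Icc (0 : ℝ) 1, E (pmAffine μ ν s) = G s :=
    fun s hs => (EReal.coe_toReal (hfin s hs) (hEbot _)).symm
  have hG0 : G 0 ≤ z := by
    rw [← EReal.coe_le_coe_iff, ← hE_eq 0 ⟨le_rfl, zero_le_one⟩, pmAffine_zero]
    exact hμ
  obtain ⟨c, hzc, hc⟩ : ∃ c, (z : EReal) < E (pmAffine μ ν c) ∧ c ∈ Ioo (0 : ℝ) 1 := by
    have hlim : Tendsto (pmAffine μ ν) (𝓝[Ioo 0 1] 1) (𝓝 ν) := by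
      simpa only [pmAffine_one] using (continuousOn_pmAffine μ ν 1 ⟨zero_le_one, le_rfl⟩)
        |>.mono_left (nhdsWithin_mono _ Ioo_subset_Icc_self)
    have : (𝓝[Ioo (0 : ℝ) 1] 1).NeBot := right_nhdsWithin_Ioo_neBot zero_lt_one
    have hzν : (z : EReal) < E ν := by rw [hν]; exact_mod_cast hz
    exact ((hlim.eventually (hElsc ν z hzν)).and self_mem_nhdsWithin).exists
  have hGc : z ≤ G c := by
    rw [← EReal.coe_le_coe_iff, ← hE_eq c (Ioo_subset_Icc_self hc)]
    exact hzc.le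
  obtain ⟨s, hs, hGs⟩ :=
    (convexOn_toReal_energy_pmAffine hEbot hEconv hfin).exists_eq_of_le_of_le hc.1 hc.2 hG0 hGc
  have hs' : s ∈ Icc (0 : ℝ) 1 := ⟨hs.1, hs.2.trans hc.2.le⟩
  exact ⟨s, hs', by rw [hE_eq s hs']; exact_mod_cast hGs⟩

end Energy

section EntropyAtEnergy

variable {X : Type*} [MeasurableSpace X] (μ0 : ProbabilityMeasure X)
  {E : ProbabilityMeasure X → EReal}

lemma Sm_le_Sent {μ : ProbabilityMeasure X} {e : ℝ} (h : E μ = e) :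
    Sm (μ0 : Measure X) μ ≤ Sent μ0 E e :=
  le_sSup ⟨μ, h, rfl⟩

lemma Sent_mul_add_mul_le {t : ℝ} (ht0 : 0 < t) (ht1 : t < 1) {x y : ℝ} {c : EReal}
    (h : ∀ μ ν, E μ = x → E ν = y →
      (t : EReal) * Sm (μ0 : Measure X) μ + ((1 - t : ℝ) : EReal) * Sm (μ0 : Measure X) ν ≤ c) :
    (t : EReal) * Sent μ0 E x + ((1 - t : ℝ) : EReal) * Sent μ0 E y ≤ c := by
  refine EReal.add_le_of_forall_lt fun a ha b hb => ?_
  obtain ⟨_, ⟨μ, hμ, rfl⟩, ha⟩ := (EReal.lt_coe_mul_sSup_iff ht0).1 ha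
  obtain ⟨_, ⟨ν, hν, rfl⟩, hb⟩ := (EReal.lt_coe_mul_sSup_iff (sub_pos.2 ht1)).1 hb
  exact (add_le_add ha.le hb.le).trans (h μ ν hμ hν)

lemma Sm_le_Sent_of_energy_le [TopologicalSpace X] [OpensMeasurableSpace X]
    (hEbot : ∀ μ, E μ ≠ ⊥) (hElsc : LowerSemicontinuous E) (hEconv : EConvex E) {e0 : ℝ}
    (he0 : E μ0 = e0) {μ : ProbabilityMeasure X} {z : ℝ} (hμ : E μ ≤ z) (hz : z ≤ e0) :
    Sm (μ0 : Measure X) μ ≤ Sent μ0 E z := by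
  rcases hz.eq_or_lt with rfl | hz
  · calc Sm (μ0 : Measure X) μ ≤ 0 := Sm_nonpos _ _
      _ = Sm (μ0 : Measure X) μ0 := (Sm_self _).symm
      _ ≤ Sent μ0 E z := Sm_le_Sent μ0 he0
  · obtain ⟨s, hs, hEs⟩ := exists_energy_pmAffine_eq hEbot hElsc hEconv hμ he0 hz
    exact (Sm_le_Sm_pmAffine_reference μ0 μ hs.1 hs.2).trans (Sm_le_Sent μ0 hEs)

end EntropyAtEnergy

theorem statement9_general
    {X : Type*} [TopologicalSpace X]
    [MeasurableSpace X] [BorelSpace X]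
    (μ0 : ProbabilityMeasure X) (E : ProbabilityMeasure X → EReal)
    (hEbot : ∀ μ, E μ ≠ ⊥)
    (hElsc : LowerSemicontinuous E)
    (hEconv : EConvex E)
    (e0 : ℝ) (he0 : E μ0 = (e0 : EReal)) :
    ConcOn (Iic e0) (Sent μ0 E) := by
  intro x hx y hy t ht0 ht1
  rcases ht0.eq_or_lt with rfl | ht0
  · simp
  rcases ht1.eq_or_lt with rfl | ht1
  · simp
  have hz : t * x + (1 - t) * y ≤ e0 := by nlinarith [mem_Iic.1 hx, mem_Iic.1 hy]
  refine Sent_mul_add_mul_le μ0 ht0 ht1 fun μ ν hμ hν => ?_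
  have hE : E (pmAffine ν μ t) ≤ ((t * x + (1 - t) * y : ℝ) : EReal) := by
    have h := hEconv ν μ t ht0.le ht1.le
    rw [hμ, hν] at h
    exact h.trans_eq (by norm_cast; ring)
  rw [add_comm]
  calc _ ≤ Sm (μ0 : Measure X) (pmAffine ν μ t) := le_Sm_pmAffine μ0 ν μ ht0.le ht1.le
    _ ≤ Sent μ0 E (t * x + (1 - t) * y) :=
        Sm_le_Sent_of_energy_le μ0 hEbot hElsc hEconv he0 hE hz

/-- If `E` is convex on `P(X)` and `e₀ := E(μ0) < ∞`, then the entropy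
`S(e)` is concave on `(-∞, e₀]`. -/
theorem statement9
    {X : Type*} [TopologicalSpace X] [CompactSpace X] [T2Space X]
    [MeasurableSpace X] [BorelSpace X]
    (μ0 : ProbabilityMeasure X) (E : ProbabilityMeasure X → EReal)
    (hEbot : ∀ μ, E μ ≠ ⊥)
    (hElsc : LowerSemicontinuous E)
    (hEconv : EConvex E)
    (e0 : ℝ) (he0 : E μ0 = (e0 : EReal)) :
    ConcOn (Iic e0) (Sent μ0 E) :=
  statement9_general μ0 E hEbot hElsc hEconv e0 he0
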